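/- Adaptive SR e-detectors are valid e-detectors: let {ω_k}_{k≥1} be nonnegative weights, K : ℕ → ℕ a nondecreasing scheduling function with generalized inverse K⁻¹(k) := inf{j ≥ 1 : K(j) ≥ k}, γ_j := 1/Σ_{k=1}^{K(j)} ω_k ≥ 1 assumed finite, and for each k let Λ^(j)(k) be e_j-processes built from baseline increments L(k). Then M^aSR_n := Σ_{k=1}^{K(n)} ω_k Σ_{j=K⁻¹(k)}^n γ_j Π_{i=j}^n L_i(k) satisfies E[M^aSR_τ] ≤ E[τ] for all stopping times τ. -/

import Mathlib

open MeasureTheory Filter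
open scoped ENNReal

noncomputable section

/-- A stopping time (possibly infinite, valued in `ℕ∞`) with respect to a filtration. -/
def IsStoppingTimeENat {Ω : Type*} {m0 : MeasurableSpace Ω}
    (𝒢 : Filtration ℕ m0) (τ : Ω → ℕ∞) : Prop :=
  ∀ n : ℕ, MeasurableSet[𝒢 n] {ω | τ ω ≤ (n : ℕ∞)}

/-- The value of a process at a stopping time, with `limsup` at infinity. -/
def stoppedVal {Ω : Type*} (M : ℕ → Ω → ℝ≥0∞) (τ : Ω → ℕ∞) (ω : Ω) : ℝ≥0∞ :=
  if τ ω = ⊤ then limsup (fun n => M n ω) atTop else M (τ ω).toNat ω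

/-- An e-detector: a nonnegative adapted process with `E[M_τ] ≤ E[τ]` for all stopping times. -/
def IsEDetector {Ω : Type*} {m0 : MeasurableSpace Ω}
    (𝒢 : Filtration ℕ m0) (μ : Measure Ω) (M : ℕ → Ω → ℝ≥0∞) : Prop :=
  (∀ n, Measurable[𝒢 n] (M n)) ∧
  ∀ τ : Ω → ℕ∞, IsStoppingTimeENat 𝒢 τ →
    ∫⁻ ω, stoppedVal M τ ω ∂μ ≤ ∫⁻ ω, (τ ω : ℝ≥0∞) ∂μ

/-! If `Z⁽ʲ⁾_n = γ_j ∑_{k ≤ K j} w_k ∏_{i=j}^n L_i(k)`, interchanging the sums over `k` and `j`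
writes the detector as `M_n = ∑_{j=1}^n Z⁽ʲ⁾_n`. Each `Z⁽ʲ⁾` is a nonnegative supermartingale from
time `j - 1` on, and `γ_j` normalises the weights so that `Z⁽ʲ⁾_{j-1} = 1`. Optional stopping bounds
`E[Z⁽ʲ⁾_τ; τ ≥ j]` by `P(τ ≥ j)`, and summing over `j` gives `E[M_τ] ≤ ∑_j P(τ ≥ j) = E[τ]`.
When `τ = ∞` with positive probability, `E[τ] = ∞`. -/

namespace IsStoppingTimeENat

variable {Ω : Type*} {m0 : MeasurableSpace Ω} {𝒢 : Filtration ℕ m0} {τ : Ω → ℕ∞}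

lemma measurableSet_lt (hτ : IsStoppingTimeENat 𝒢 τ) (n : ℕ) :
    MeasurableSet[𝒢 n] {ω | (n : ℕ∞) < τ ω} := by
  simpa only [Set.compl_ofPred, not_le] using (hτ n).compl

lemma measurableSet_eq (hτ : IsStoppingTimeENat 𝒢 τ) (n : ℕ) :
    MeasurableSet[𝒢 n] {ω | τ ω = n} := by
  cases n with
  | zero => simpa only [Nat.cast_zero, nonpos_iff_eq_zero] using hτ 0
  | succ n =>
    have hset : {ω | τ ω = ↑(n + 1)} = {ω | τ ω ≤ ↑(n + 1)} ∩ {ω | (n : ℕ∞) < τ ω} := by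
      ext ω
      simp only [Set.mem_ofPred_eq, Set.mem_inter_iff, Nat.cast_add_one,
        ← ENat.add_one_le_iff (ENat.natCast_ne_top n), le_antisymm_iff]
    rw [hset]
    exact (hτ (n + 1)).inter (𝒢.mono n.le_succ _ (hτ.measurableSet_lt n))

end IsStoppingTimeENat

lemma ENat.toENNReal_eq_tsum_ite_lt (a : ℕ∞) :
    (a : ℝ≥0∞) = ∑' i : ℕ, if (i : ℕ∞) < a then 1 else 0 := by
  induction a using ENat.recTopCoe with
  | top => simp
  | coe m =>
    rw [tsum_eq_sum (s := Finset.range m) (fun i hi => by simpa using hi),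
      Finset.sum_congr rfl fun i hi => if_pos (by simpa using hi)]
    simp

section Integrals

variable {Ω : Type*} {m0 : MeasurableSpace Ω} (μ : Measure Ω)

lemma lintegral_enat_eq_tsum_measure_lt {τ : Ω → ℕ∞}
    (hτ : ∀ i : ℕ, MeasurableSet {ω | (i : ℕ∞) < τ ω}) :
    ∫⁻ ω, (τ ω : ℝ≥0∞) ∂μ = ∑' i : ℕ, μ {ω | (i : ℕ∞) < τ ω} := by
  have hpt : ∀ ω, (τ ω : ℝ≥0∞) = ∑' i : ℕ, {ω | (i : ℕ∞) < τ ω}.indicator 1 ω := fun ω => by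
    simp only [ENat.toENNReal_eq_tsum_ite_lt, Set.indicator_apply, Set.mem_ofPred_eq, Pi.one_apply]
  rw [lintegral_congr hpt, lintegral_tsum fun i => (measurable_one.indicator (hτ i)).aemeasurable]
  exact tsum_congr fun i => lintegral_indicator_one (hτ i)

/-- On `m`, the measure `μ.withDensity g` is dominated by `μ`. -/
lemma lintegral_mul_le_of_setLIntegral_le {m : MeasurableSpace Ω} (hm : m ≤ m0)
    {f g : Ω → ℝ≥0∞} (hf : Measurable[m] f) (hg : Measurable[m0] g)
    (hgle : ∀ A : Set Ω, MeasurableSet[m] A → ∫⁻ ω in A, g ω ∂μ ≤ μ A) :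
    ∫⁻ ω, f ω * g ω ∂μ ≤ ∫⁻ ω, f ω ∂μ := by
  have htrim : (μ.withDensity g).trim hm ≤ μ.trim hm := Measure.le_iff.2 fun s hs => by
    rw [trim_measurableSet_eq hm hs, trim_measurableSet_eq hm hs, withDensity_apply _ (hm s hs)]
    exact hgle s hs
  calc ∫⁻ ω, f ω * g ω ∂μ = ∫⁻ ω, f ω ∂(μ.withDensity g) := by
        rw [lintegral_withDensity_eq_lintegral_mul μ hg (hf.mono hm le_rfl)]
        simp only [Pi.mul_apply, mul_comm]
    _ = ∫⁻ ω, f ω ∂((μ.withDensity g).trim hm) := (lintegral_trim hm hf).symm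
    _ ≤ ∫⁻ ω, f ω ∂(μ.trim hm) := lintegral_mono' htrim le_rfl
    _ = ∫⁻ ω, f ω ∂μ := lintegral_trim hm hf

lemma setLIntegral_mul_le_of_setLIntegral_le {m : MeasurableSpace Ω} (hm : m ≤ m0)
    {f g : Ω → ℝ≥0∞} (hf : Measurable[m] f) (hg : Measurable[m0] g)
    (hgle : ∀ A : Set Ω, MeasurableSet[m] A → ∫⁻ ω in A, g ω ∂μ ≤ μ A)
    {B : Set Ω} (hB : MeasurableSet[m] B) :
    ∫⁻ ω in B, f ω * g ω ∂μ ≤ ∫⁻ ω in B, f ω ∂μ := by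
  refine lintegral_mul_le_of_setLIntegral_le _ hm hf hg fun A hA => ?_
  rw [Measure.restrict_restrict (hm A hA), Measure.restrict_apply (hm A hA)]
  exact hgle _ (hA.inter hB)

end Integrals

section Supermartingale

variable {Ω : Type*} {m0 : MeasurableSpace Ω} (𝒢 : Filtration ℕ m0) (μ : Measure Ω)

/-- The supermartingale inequality is tested on `𝒢 N`-measurable sets instead of through
conditional expectations, so no integrability is needed. -/
structure IsSupermartingaleFrom (m : ℕ) (Y : ℕ → Ω → ℝ≥0∞) : Prop where
  measurable : ∀ n, Measurable[𝒢 n] (Y n)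
  setLIntegral_succ_le : ∀ N, m ≤ N → ∀ B : Set Ω, MeasurableSet[𝒢 N] B →
    ∫⁻ ω in B, Y (N + 1) ω ∂μ ≤ ∫⁻ ω in B, Y N ω ∂μ

variable {𝒢 μ}

namespace IsSupermartingaleFrom

variable {m : ℕ} {Y : ℕ → Ω → ℝ≥0∞}

lemma measurable' (hY : IsSupermartingaleFrom 𝒢 μ m Y) (n : ℕ) : Measurable (Y n) :=
  (hY.measurable n).mono (𝒢.le n) le_rfl

lemma const_mul (hY : IsSupermartingaleFrom 𝒢 μ m Y) (c : ℝ≥0∞) :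
    IsSupermartingaleFrom 𝒢 μ m (fun n ω => c * Y n ω) where
  measurable n := (hY.measurable n).const_mul c
  setLIntegral_succ_le N hN B hB := by
    rw [lintegral_const_mul c (hY.measurable' _), lintegral_const_mul c (hY.measurable' _)]
    exact mul_le_mul_right (hY.setLIntegral_succ_le N hN B hB) c

lemma finset_sum {ι : Type*} (s : Finset ι) {Y : ι → ℕ → Ω → ℝ≥0∞}
    (hY : ∀ i ∈ s, IsSupermartingaleFrom 𝒢 μ m (Y i)) :
    IsSupermartingaleFrom 𝒢 μ m (fun n ω => ∑ i ∈ s, Y i n ω) where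
  measurable n := Finset.measurable_sum _ fun i hi => (hY i hi).measurable n
  setLIntegral_succ_le N hN B hB := by
    rw [lintegral_finsetSum _ fun i hi => (hY i hi).measurable' _,
      lintegral_finsetSum _ fun i hi => (hY i hi).measurable' _]
    exact Finset.sum_le_sum fun i hi => (hY i hi).setLIntegral_succ_le N hN B hB

lemma sum_setLIntegral_stopped_add_le (hY : IsSupermartingaleFrom 𝒢 μ m Y)
    {τ : Ω → ℕ∞} (hτ : IsStoppingTimeENat 𝒢 τ) {N : ℕ} (hN : m ≤ N) :
    ∑ n ∈ Finset.Ioc m N, ∫⁻ ω in {ω | τ ω = n}, Y n ω ∂μ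
        + ∫⁻ ω in {ω | (N : ℕ∞) < τ ω}, Y N ω ∂μ
      ≤ ∫⁻ ω in {ω | (m : ℕ∞) < τ ω}, Y m ω ∂μ := by
  induction N, hN using Nat.le_induction with
  | base => simp
  | succ N hmN ih =>
    have hsplit : {ω | (N : ℕ∞) < τ ω} = {ω | τ ω = ↑(N + 1)} ∪ {ω | ↑(N + 1) < τ ω} := by
      ext ω
      simp only [Set.mem_ofPred_eq, Set.mem_union, Nat.cast_add_one,
        ← ENat.add_one_le_iff (ENat.natCast_ne_top N), le_iff_eq_or_lt, eq_comm]
    have hdisj : Disjoint {ω | τ ω = ↑(N + 1)} {ω | ↑(N + 1) < τ ω} :=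
      Set.disjoint_left.2 fun ω h1 h2 => (h1 ▸ h2 : ((N + 1 : ℕ) : ℕ∞) < _).false
    calc ∑ n ∈ Finset.Ioc m (N + 1), ∫⁻ ω in {ω | τ ω = n}, Y n ω ∂μ
          + ∫⁻ ω in {ω | ↑(N + 1) < τ ω}, Y (N + 1) ω ∂μ
        = ∑ n ∈ Finset.Ioc m N, ∫⁻ ω in {ω | τ ω = n}, Y n ω ∂μ
          + ∫⁻ ω in {ω | (N : ℕ∞) < τ ω}, Y (N + 1) ω ∂μ := by
          rw [Finset.sum_Ioc_succ_top hmN, add_assoc, hsplit,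
            lintegral_union (𝒢.le _ _ (hτ.measurableSet_lt (N + 1))) hdisj]
      _ ≤ ∑ n ∈ Finset.Ioc m N, ∫⁻ ω in {ω | τ ω = n}, Y n ω ∂μ
          + ∫⁻ ω in {ω | (N : ℕ∞) < τ ω}, Y N ω ∂μ := by
          exact add_le_add le_rfl (hY.setLIntegral_succ_le N hmN _ (hτ.measurableSet_lt N))
      _ ≤ _ := ih

lemma tsum_setLIntegral_stopped_le (hY : IsSupermartingaleFrom 𝒢 μ m Y)
    {τ : Ω → ℕ∞} (hτ : IsStoppingTimeENat 𝒢 τ) :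
    ∑' n, (if m < n then ∫⁻ ω in {ω | τ ω = n}, Y n ω ∂μ else 0)
      ≤ ∫⁻ ω in {ω | (m : ℕ∞) < τ ω}, Y m ω ∂μ := by
  refine ENNReal.tsum_le_of_sum_range_le fun N => ?_
  calc ∑ n ∈ Finset.range N, (if m < n then ∫⁻ ω in {ω | τ ω = n}, Y n ω ∂μ else 0)
      = ∑ n ∈ (Finset.range N).filter (m < ·), ∫⁻ ω in {ω | τ ω = n}, Y n ω ∂μ :=
        (Finset.sum_filter _ _).symm
    _ ≤ ∑ n ∈ Finset.Ioc m (m + N), ∫⁻ ω in {ω | τ ω = n}, Y n ω ∂μ := by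
        refine Finset.sum_le_sum_of_subset fun n hn => ?_
        simp only [Finset.mem_filter, Finset.mem_range, Finset.mem_Ioc] at hn ⊢
        omega
    _ ≤ _ := le_trans le_self_add (hY.sum_setLIntegral_stopped_add_le hτ (by omega))

end IsSupermartingaleFrom

end Supermartingale

lemma ENNReal.tsum_sum_Icc_one_eq_tsum_tsum (a : ℕ → ℕ → ℝ≥0∞) :
    ∑' n, ∑ j ∈ Finset.Icc 1 n, a j n = ∑' m, ∑' n, if m < n then a (m + 1) n else 0 := by
  have hIcc : ∀ n, ∑ j ∈ Finset.Icc 1 n, a j n = ∑' m, if m < n then a (m + 1) n else 0 := by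
    intro n
    rw [tsum_eq_sum (s := Finset.range n) fun m hm => if_neg (by simpa using hm),
      Finset.sum_congr rfl fun m hm => if_pos (Finset.mem_range.1 hm), Finset.range_eq_Ico,
      Finset.sum_Ico_add' (a · n), zero_add, Finset.Ico_add_one_right_eq_Icc]
  simp_rw [hIcc]
  exact ENNReal.tsum_comm

section Detector

variable {Ω : Type*} {m0 : MeasurableSpace Ω} {𝒢 : Filtration ℕ m0} {μ : Measure Ω}

lemma lintegral_stoppedVal_eq_tsum {M : ℕ → Ω → ℝ≥0∞} (hM : ∀ n, Measurable (M n))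
    {τ : Ω → ℕ∞} (hτ : IsStoppingTimeENat 𝒢 τ) (hfin : μ {ω | τ ω = ⊤} = 0) :
    ∫⁻ ω, stoppedVal M τ ω ∂μ = ∑' n : ℕ, ∫⁻ ω in {ω | τ ω = n}, M n ω ∂μ := by
  have hmeas : ∀ n : ℕ, MeasurableSet {ω | τ ω = n} := fun n => 𝒢.le n _ (hτ.measurableSet_eq n)
  have hae : stoppedVal M τ =ᵐ[μ] fun ω => ∑' n : ℕ, {ω | τ ω = n}.indicator (M n) ω := by
    refine (measure_eq_zero_iff_ae_notMem.1 hfin).mono fun ω hω => ?_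
    obtain ⟨k, hk⟩ := ENat.ne_top_iff_exists.1 hω
    simp only [stoppedVal, ← hk, ENat.natCast_ne_top, if_false, ENat.toNat_natCast]
    rw [tsum_eq_single k fun n hn => Set.indicator_of_notMem (by simp [← hk, hn.symm]) _]
    simp [← hk]
  rw [lintegral_congr_ae hae, lintegral_tsum fun n => ((hM n).indicator (hmeas n)).aemeasurable]
  exact tsum_congr fun n => lintegral_indicator (hmeas n) _

/-- `Z j` is a process started at time `j - 1` with value `1` there. -/
theorem lintegral_stoppedVal_sum_le (Z : ℕ → ℕ → Ω → ℝ≥0∞)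
    (hZ : ∀ m, IsSupermartingaleFrom 𝒢 μ m (Z (m + 1))) (hZ_start : ∀ m ω, Z (m + 1) m ω = 1)
    {τ : Ω → ℕ∞} (hτ : IsStoppingTimeENat 𝒢 τ) :
    ∫⁻ ω, stoppedVal (fun n ω => ∑ j ∈ Finset.Icc 1 n, Z j n ω) τ ω ∂μ
      ≤ ∫⁻ ω, (τ ω : ℝ≥0∞) ∂μ := by
  have hlt : ∀ i : ℕ, MeasurableSet {ω | (i : ℕ∞) < τ ω} :=
    fun i => 𝒢.le i _ (hτ.measurableSet_lt i)
  rw [lintegral_enat_eq_tsum_measure_lt μ hlt]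
  by_cases hfin : μ {ω | τ ω = ⊤} = 0
  swap
  · calc _ ≤ ⊤ := le_top
      _ = ∑' _ : ℕ, μ {ω | τ ω = ⊤} := (ENNReal.tsum_const_eq_top_of_ne_zero hfin).symm
      _ ≤ _ := ENNReal.tsum_le_tsum fun i => measure_mono fun ω hω => by simp [hω.out]
  have hZm : ∀ j n, 1 ≤ j → Measurable (Z j n) := fun j n hj => by
    obtain ⟨m, rfl⟩ := Nat.exists_eq_add_of_le' hj
    exact (hZ m).measurable' n
  have hM : ∀ n, Measurable fun ω => ∑ j ∈ Finset.Icc 1 n, Z j n ω := fun n =>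
    Finset.measurable_sum _ fun j hj => hZm j n (Finset.mem_Icc.1 hj).1
  calc ∫⁻ ω, stoppedVal (fun n ω => ∑ j ∈ Finset.Icc 1 n, Z j n ω) τ ω ∂μ
      = ∑' n : ℕ, ∑ j ∈ Finset.Icc 1 n, ∫⁻ ω in {ω | τ ω = n}, Z j n ω ∂μ := by
        rw [lintegral_stoppedVal_eq_tsum hM hτ hfin]
        exact tsum_congr fun n =>
          lintegral_finsetSum _ fun j hj => hZm j n (Finset.mem_Icc.1 hj).1
    _ = ∑' (m : ℕ) (n : ℕ), if m < n then ∫⁻ ω in {ω | τ ω = n}, Z (m + 1) n ω ∂μ else 0 :=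
        ENNReal.tsum_sum_Icc_one_eq_tsum_tsum _
    _ ≤ ∑' m : ℕ, ∫⁻ ω in {ω | (m : ℕ∞) < τ ω}, Z (m + 1) m ω ∂μ :=
        ENNReal.tsum_le_tsum fun m => (hZ m).tsum_setLIntegral_stopped_le hτ
    _ = ∑' m : ℕ, μ {ω | (m : ℕ∞) < τ ω} := by simp only [hZ_start, setLIntegral_one]

end Detector

section AdaptiveSR

variable {Ω : Type*} {m0 : MeasurableSpace Ω} {𝒢 : Filtration ℕ m0} {μ : Measure Ω}

lemma isSupermartingaleFrom_prod_Icc {L : ℕ → Ω → ℝ≥0∞} (hL : ∀ n, Measurable[𝒢 n] (L n))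
    (hbase : ∀ N A, MeasurableSet[𝒢 N] A → ∫⁻ ω in A, L (N + 1) ω ∂μ ≤ μ A) (m : ℕ) :
    IsSupermartingaleFrom 𝒢 μ m (fun n ω => ∏ i ∈ Finset.Icc (m + 1) n, L i ω) := by
  have hprod : ∀ n, Measurable[𝒢 n] fun ω => ∏ i ∈ Finset.Icc (m + 1) n, L i ω := fun n =>
    Finset.measurable_prod _ fun i hi => (hL i).mono (𝒢.mono (Finset.mem_Icc.1 hi).2) le_rfl
  refine ⟨hprod, fun N hN B hB => ?_⟩
  simp only [Finset.prod_Icc_succ_top (Nat.succ_le_succ hN)]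
  exact setLIntegral_mul_le_of_setLIntegral_le μ (𝒢.le N) (hprod N)
    ((hL (N + 1)).mono (𝒢.le _) le_rfl) (hbase N) hB

variable (w : ℕ → ℝ≥0∞) (K : ℕ → ℕ) (L : ℕ → ℕ → Ω → ℝ≥0∞)

def adaptiveSRTerm (j n : ℕ) (ω : Ω) : ℝ≥0∞ :=
  ∑ k ∈ Finset.Icc 1 (K j), w k *
    ((∑ k' ∈ Finset.Icc 1 (K j), w k')⁻¹ * ∏ i ∈ Finset.Icc j n, L k i ω)

lemma adaptiveSR_eq_sum_adaptiveSRTerm (hK : Monotone K) (n : ℕ) (ω : Ω) :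
    ∑ k ∈ Finset.Icc 1 (K n), w k *
        ∑ j ∈ Finset.Icc (sInf {j | 1 ≤ j ∧ k ≤ K j}) n,
          (∑ k' ∈ Finset.Icc 1 (K j), w k')⁻¹ * ∏ i ∈ Finset.Icc j n, L k i ω
      = ∑ j ∈ Finset.Icc 1 n, adaptiveSRTerm w K L j n ω := by
  simp only [adaptiveSRTerm, Finset.mul_sum]
  refine Finset.sum_comm' fun k j => ?_
  simp only [Finset.mem_Icc]
  constructor
  · rintro ⟨⟨hk, hkn⟩, hinf, hjn⟩
    have hmem := Nat.sInf_mem (s := {j | 1 ≤ j ∧ k ≤ K j})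
      ⟨max n 1, le_max_right _ _, hkn.trans (hK (le_max_left _ _))⟩
    exact ⟨⟨hk, hmem.2.trans (hK hinf)⟩, hmem.1.trans hinf, hjn⟩
  · rintro ⟨⟨hk, hkj⟩, hj, hjn⟩
    exact ⟨⟨hk, hkj.trans (hK hjn)⟩, Nat.sInf_le ⟨hj, hkj⟩, hjn⟩

lemma adaptiveSRTerm_succ_self {m : ℕ} (h0 : ∑ k ∈ Finset.Icc 1 (K (m + 1)), w k ≠ 0)
    (htop : ∑ k ∈ Finset.Icc 1 (K (m + 1)), w k ≠ ⊤) (ω : Ω) :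
    adaptiveSRTerm w K L (m + 1) m ω = 1 := by
  simp only [adaptiveSRTerm, Finset.Icc_eq_empty (Nat.not_succ_le_self m), Finset.prod_empty,
    mul_one, ← Finset.sum_mul]
  exact ENNReal.mul_inv_cancel h0 htop

lemma isSupermartingaleFrom_adaptiveSRTerm (hL : ∀ k n, Measurable[𝒢 n] (L k n))
    (hbase : ∀ k N A, MeasurableSet[𝒢 N] A → ∫⁻ ω in A, L k (N + 1) ω ∂μ ≤ μ A) (m : ℕ) :
    IsSupermartingaleFrom 𝒢 μ m (adaptiveSRTerm w K L (m + 1)) :=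
  IsSupermartingaleFrom.finset_sum _ fun k _ =>
    ((isSupermartingaleFrom_prod_Icc (hL k) (hbase k) m).const_mul _).const_mul _

end AdaptiveSR

theorem stmt16_general {Ω : Type*} {m0 : MeasurableSpace Ω} (μ : Measure Ω)
    (𝒢 : Filtration ℕ m0)
    (w : ℕ → ℝ≥0∞) (K : ℕ → ℕ) (hK : Monotone K)
    (hw : ∀ j, 1 ≤ j → 0 < ∑ k ∈ Finset.Icc 1 (K j), w k ∧ ∑ k ∈ Finset.Icc 1 (K j), w k ≤ 1)
    (L : ℕ → ℕ → Ω → ℝ≥0∞)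
    (hadapt : ∀ k n, Measurable[𝒢 n] (L k n))
    (hbase : ∀ k n, 1 ≤ n → ∀ A : Set Ω, MeasurableSet[𝒢 (n - 1)] A →
        ∫⁻ ω in A, L k n ω ∂μ ≤ μ A) :
    ∀ τ : Ω → ℕ∞, IsStoppingTimeENat 𝒢 τ →
      ∫⁻ ω, stoppedVal
        (fun n ω => ∑ k ∈ Finset.Icc 1 (K n), w k *
          ∑ j ∈ Finset.Icc (sInf {j | 1 ≤ j ∧ k ≤ K j}) n,
            (∑ k' ∈ Finset.Icc 1 (K j), w k')⁻¹ * ∏ i ∈ Finset.Icc j n, L k i ω)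
        τ ω ∂μ ≤ ∫⁻ ω, (τ ω : ℝ≥0∞) ∂μ := by
  intro τ hτ
  simp only [adaptiveSR_eq_sum_adaptiveSRTerm w K L hK]
  refine lintegral_stoppedVal_sum_le _
    (isSupermartingaleFrom_adaptiveSRTerm w K L hadapt
      (fun k N A hA => hbase k (N + 1) (Nat.le_add_left 1 N) A hA)) (fun m => ?_) hτ
  obtain ⟨hpos, hle⟩ := hw (m + 1) (Nat.le_add_left 1 m)
  exact adaptiveSRTerm_succ_self w K L hpos.ne' (hle.trans_lt ENNReal.one_lt_top).ne

/-- Adaptive SR e-detectors (with scheduling function `K`, generalized inverse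
`K⁻¹(k) = sInf {j | 1 ≤ j ∧ k ≤ K j}`, and adaptive re-weighting factors
`γ_j = (∑_{k=1}^{K j} w k)⁻¹`) are valid e-detectors. -/
theorem stmt16 {Ω : Type*} {m0 : MeasurableSpace Ω} (μ : Measure Ω) [IsProbabilityMeasure μ]
    (𝒢 : Filtration ℕ m0)
    (w : ℕ → ℝ≥0∞) (K : ℕ → ℕ) (hK : Monotone K)
    (hw : ∀ j, 1 ≤ j → 0 < ∑ k ∈ Finset.Icc 1 (K j), w k ∧ ∑ k ∈ Finset.Icc 1 (K j), w k ≤ 1)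
    (L : ℕ → ℕ → Ω → ℝ≥0∞)
    (hadapt : ∀ k n, Measurable[𝒢 n] (L k n))
    (hbase : ∀ k n, 1 ≤ n → ∀ A : Set Ω, MeasurableSet[𝒢 (n - 1)] A →
        ∫⁻ ω in A, L k n ω ∂μ ≤ μ A) :
    ∀ τ : Ω → ℕ∞, IsStoppingTimeENat 𝒢 τ →
      ∫⁻ ω, stoppedVal
        (fun n ω => ∑ k ∈ Finset.Icc 1 (K n), w k *
          ∑ j ∈ Finset.Icc (sInf {j | 1 ≤ j ∧ k ≤ K j}) n,
            (∑ k' ∈ Finset.Icc 1 (K j), w k')⁻¹ * ∏ i ∈ Finset.Icc j n, L k i ω)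
        τ ω ∂μ ≤ ∫⁻ ω, (τ ω : ℝ≥0∞) ∂μ :=
  stmt16_general μ 𝒢 w K hK hw L hadapt hbase
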